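/- arXiv:1004.2899 — 3 statements merged into one kernel-verified Lean document; each statement's English description precedes it below -/
import Mathlib

section
/- Tutte–Berge formula: For any finite simple graph G = (V, E), the maximum size of a matching in G equals (1/2) · min over S ⊆ V of (|S| − odd(G − S) + |V|), where odd(G − S) is the number of odd-cardinality connected components of the induced subgraph on V \ S. -/
open SimpleGraph

namespace TB

variable {V : Type*} [Fintype V] [DecidableEq V]

/-- A partner function: a partial involution along edges of `G`. -/
def IsPF (G : SimpleGraph V) (p : V → Option V) : Prop :=
  ∀ ⦃v w⦄, p v = some w → p w = some v ∧ G.Adj v w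

/-- support of a partner function -/
def sup (p : V → Option V) : Finset V := Finset.univ.filter (fun v => (p v).isSome)

lemma mem_sup {p : V → Option V} {v : V} : v ∈ sup p ↔ ∃ w, p v = some w := by
  rw [sup, Finset.mem_filter]
  simp only [Finset.mem_univ, true_and]
  cases h : p v <;> simp [h]

lemma not_mem_sup {p : V → Option V} {v : V} : v ∉ sup p ↔ p v = none := by
  rw [mem_sup]
  cases h : p v <;> simp [h]

lemma IsPF.ne {G : SimpleGraph V} {p : V → Option V} (hp : IsPF G p) {v w : V}
    (h : p v = some w) : v ≠ w := fun he => G.loopless.irrefl v (he ▸ (hp h).2)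

/-- even cardinality from a fixed-point free involution -/
lemma even_card_of_invol (s : Finset V) (f : V → V)
    (h : ∀ v ∈ s, f v ∈ s ∧ f v ≠ v ∧ f (f v) = v) : Even s.card := by
  classical
  obtain ⟨n, hn⟩ : ∃ n, s.card = n := ⟨_, rfl⟩
  induction n using Nat.strong_induction_on generalizing s with
  | _ n ih =>
    rcases Finset.eq_empty_or_nonempty s with rfl | ⟨a, ha⟩
    · simp [← hn]
    · obtain ⟨hfa, hne, hff⟩ := h a ha
      set s' := (s.erase a).erase (f a) with hs'
      have hcard : s'.card = n - 2 := by
        rw [hs', Finset.card_erase_of_mem (Finset.mem_erase.2 ⟨hne, hfa⟩),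
          Finset.card_erase_of_mem ha, hn]
        omega
      have hsub : ∀ v ∈ s', v ∈ s ∧ v ≠ a ∧ v ≠ f a := by
        intro v hv
        simp only [hs', Finset.mem_erase] at hv
        exact ⟨hv.2.2, hv.2.1, hv.1⟩
      have h' : ∀ v ∈ s', f v ∈ s' ∧ f v ≠ v ∧ f (f v) = v := by
        intro v hv
        obtain ⟨hvs, hva, hvfa⟩ := hsub v hv
        obtain ⟨h1, h2, h3⟩ := h v hvs
        refine ⟨?_, h2, h3⟩
        simp only [hs', Finset.mem_erase]
        refine ⟨fun he => hva ?_, fun he => hvfa ?_, h1⟩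
        · rw [← h3, he, hff]
        · rw [← h3, he]
      have hn2 : 2 ≤ n := by
        rw [← hn]
        have : ({a, f a} : Finset V) ⊆ s := by
          intro x hx; simp only [Finset.mem_insert, Finset.mem_singleton] at hx
          rcases hx with rfl | rfl; exacts [ha, hfa]
        calc 2 = ({a, f a} : Finset V).card := by rw [Finset.card_insert_of_notMem (by simpa using hne.symm), Finset.card_singleton]
        _ ≤ s.card := Finset.card_le_card this
      have := ih (n - 2) (by omega) s' h' hcard
      rw [Nat.even_iff] at this ⊢
      omega

lemma IsPF.even_sup {G : SimpleGraph V} {p : V → Option V} (hp : IsPF G p) :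
    Even (sup p).card := by
  apply even_card_of_invol (sup p) (fun v => (p v).getD v)
  intro v hv
  obtain ⟨w, hw⟩ := mem_sup.1 hv
  obtain ⟨hsymm, hadj⟩ := hp hw
  simp only [hw, Option.getD_some]
  exact ⟨mem_sup.2 ⟨v, hsymm⟩, fun he => G.loopless.irrefl v (he ▸ hadj), by simp [hsymm]⟩

lemma even_ncard_of_invol (C : Set V) (f : V → V)
    (h : ∀ v ∈ C, f v ∈ C ∧ f v ≠ v ∧ f (f v) = v) : Even C.ncard := by
  classical
  have : C.ncard = C.toFinset.card := by
    rw [Set.ncard_eq_toFinset_card']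
  rw [this]
  exact even_card_of_invol _ f (by intro v hv; simpa [Set.mem_toFinset] using h v (by simpa [Set.mem_toFinset] using hv))

/-- The subgraph associated to a partner function. -/
def pfSub (G : SimpleGraph V) (p : V → Option V) (hp : IsPF G p) : G.Subgraph where
  verts := ↑(sup p)
  Adj v w := p v = some w
  adj_sub h := (hp h).2
  edge_vert {v w} h := by
    simp only [Finset.mem_coe]
    exact mem_sup.2 ⟨w, h⟩
  symm := ⟨fun v w h => (hp h).1⟩

lemma pfSub_isMatching {G : SimpleGraph V} {p : V → Option V} (hp : IsPF G p) :
    (pfSub G p hp).IsMatching := by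
  intro v hv
  have : v ∈ sup p := by simpa [pfSub] using hv
  obtain ⟨w, hw⟩ := mem_sup.1 this
  exact ⟨w, hw, fun y hy => by simp only [pfSub] at hy hw; rw [hw] at hy; exact (Option.some.inj hy).symm⟩

/-- the edge finset of a partner function -/
def pfEdges (p : V → Option V) : Finset (Sym2 V) :=
  (sup p).image (fun v => s(v, (p v).getD v))

lemma pfSub_edgeSet {G : SimpleGraph V} {p : V → Option V} (hp : IsPF G p) :
    (pfSub G p hp).edgeSet = ↑(pfEdges p) := by
  ext e
  induction e with
  | _ v w =>
    simp only [Subgraph.mem_edgeSet, pfSub, Finset.coe_image, Set.mem_image, pfEdges,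
      Finset.coe_filter]
    constructor
    · intro h
      exact ⟨v, by simpa using mem_sup.2 ⟨w, h⟩, by simp [h]⟩
    · rintro ⟨u, hu, he⟩
      have hu' : u ∈ sup p := by simpa using hu
      obtain ⟨z, hz⟩ := mem_sup.1 hu'
      rw [hz] at he
      simp only [Option.getD_some] at he
      rw [Sym2.eq_iff] at he
      rcases he with ⟨h1, h2⟩ | ⟨h1, h2⟩
      · rw [← h1, ← h2]; exact hz
      · rw [← h2, ← h1]; exact (hp hz).1

lemma sup_card_eq_two_mul {G : SimpleGraph V} {p : V → Option V} (hp : IsPF G p) :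
    (sup p).card = 2 * (pfEdges p).card := by
  rw [Finset.card_eq_sum_card_fiberwise (f := fun v => s(v, (p v).getD v)) (t := pfEdges p)
    (fun v hv => Finset.mem_image_of_mem _ hv)]
  rw [Finset.sum_congr rfl (g := fun _ => 2), Finset.sum_const, smul_eq_mul, mul_comm]
  intro e he
  obtain ⟨u, hu, rfl⟩ := Finset.mem_image.1 he
  obtain ⟨z, hz⟩ := mem_sup.1 hu
  have hne : u ≠ z := hp.ne hz
  have : (sup p).filter (fun v => s(v, (p v).getD v) = s(u, (p u).getD u)) = {u, z} := by
    ext x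
    simp only [Finset.mem_filter, Finset.mem_insert, Finset.mem_singleton, hz, Option.getD_some]
    constructor
    · rintro ⟨hx, he⟩
      obtain ⟨y, hy⟩ := mem_sup.1 hx
      rw [hy] at he
      simp only [Option.getD_some, Sym2.eq_iff] at he
      rcases he with ⟨h1, _⟩ | ⟨h1, h2⟩
      · exact Or.inl h1
      · exact Or.inr h1
    · rintro (rfl | rfl)
      · exact ⟨hu, by simp [hz]⟩
      · have := (hp hz).1
        exact ⟨mem_sup.2 ⟨u, this⟩, by simp [this, hz, Sym2.eq_swap]⟩
  rw [this, Finset.card_insert_of_notMem (by simpa using hne), Finset.card_singleton]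

lemma pfSub_edge_ncard {G : SimpleGraph V} {p : V → Option V} (hp : IsPF G p) :
    2 * (pfSub G p hp).edgeSet.ncard = (sup p).card := by
  rw [pfSub_edgeSet hp, Set.ncard_coe_finset, sup_card_eq_two_mul hp]

open scoped Classical in
/-- partner function of an arbitrary matching -/
noncomputable def pOf {G : SimpleGraph V} (M : G.Subgraph) : V → Option V :=
  fun v => if h : ∃ w, M.Adj v w then some h.choose else none

lemma pOf_isPF {G : SimpleGraph V} {M : G.Subgraph} (hM : M.IsMatching) : IsPF G (pOf M) := by
  intro v w h
  simp only [pOf] at h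
  split_ifs at h with hex
  · have hadj : M.Adj v w := (Option.some.inj h) ▸ hex.choose_spec
    have hex' : ∃ u, M.Adj w u := ⟨v, hadj.symm⟩
    constructor
    · simp only [pOf, dif_pos hex']
      congr 1
      obtain ⟨u, hu, huniq⟩ := hM (M.edge_vert hadj.symm)
      rw [huniq _ hex'.choose_spec, huniq _ hadj.symm]
    · exact M.adj_sub hadj

lemma sup_pOf {G : SimpleGraph V} {M : G.Subgraph} (hM : M.IsMatching) :
    ↑(sup (pOf M)) = M.verts := by
  ext v
  rw [Finset.mem_coe, mem_sup]
  constructor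
  · rintro ⟨w, hw⟩
    simp only [pOf] at hw
    split_ifs at hw with hex
    exact M.edge_vert ((Option.some.inj hw) ▸ hex.choose_spec)
  · intro hv
    obtain ⟨w, hw, -⟩ := hM hv
    have hex : ∃ u, M.Adj v u := ⟨w, hw⟩
    exact ⟨hex.choose, by simp [pOf, dif_pos hex]⟩

lemma pfSub_pOf {G : SimpleGraph V} {M : G.Subgraph} (hM : M.IsMatching) :
    pfSub G (pOf M) (pOf_isPF hM) = M := by
  ext v w
  · rw [show (pfSub G (pOf M) (pOf_isPF hM)).verts = ↑(sup (pOf M)) from rfl, sup_pOf hM]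
  · simp only [pfSub, pOf]
    constructor
    · intro h
      split_ifs at h with hex
      exact (Option.some.inj h) ▸ hex.choose_spec
    · intro h
      have hex : ∃ u, M.Adj v u := ⟨w, h⟩
      rw [dif_pos hex]
      obtain ⟨u, hu, huniq⟩ := hM (M.edge_vert h)
      rw [huniq _ hex.choose_spec, huniq _ h]

/-- `2|E(M)| = |V(M)|` for any matching. -/
lemma matching_two_mul_edge {G : SimpleGraph V} {M : G.Subgraph} (hM : M.IsMatching) :
    2 * M.edgeSet.ncard = M.verts.ncard := by
  conv_lhs => rw [← pfSub_pOf hM]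
  rw [pfSub_edge_ncard (pOf_isPF hM), ← sup_pOf hM, Set.ncard_coe_finset]

lemma exists_max_pf (G : SimpleGraph V) :
    ∃ p, IsPF G p ∧ ∀ q, IsPF G q → (sup q).card ≤ (sup p).card := by
  have : Nonempty {p : V → Option V // IsPF G p} :=
    ⟨⟨fun _ => none, fun v w h => by simp at h⟩⟩
  obtain ⟨⟨p, hp⟩, hmax⟩ := Finite.exists_max (fun q : {p : V → Option V // IsPF G p} => (sup q.1).card)
  exact ⟨p, hp, fun q hq => hmax ⟨q, hq⟩⟩


section Walk

variable {G : SimpleGraph V} {p q : V → Option V} {t : V}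

/-- step function: `p` on even steps, `q` on odd steps -/
def stp (p q : V → Option V) (n : ℕ) : V → Option V := if n % 2 = 0 then p else q

lemma stp_congr (p q : V → Option V) {m n : ℕ} (h : m % 2 = n % 2) :
    stp p q m = stp p q n := by unfold stp; rw [h]

lemma stp_invol (hp : IsPF G p) (hq : IsPF G q) {n : ℕ} {u v : V}
    (h : stp p q n u = some v) : stp p q n v = some u := by
  unfold stp at h ⊢
  split_ifs at h ⊢
  · exact (hp h).1
  · exact (hq h).1

lemma stp_ne (hp : IsPF G p) (hq : IsPF G q) {n : ℕ} {u v : V}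
    (h : stp p q n u = some v) : u ≠ v := by
  unfold stp at h
  split_ifs at h
  · exact hp.ne h
  · exact hq.ne h

/-- the alternating walk sequence -/
def seq (p q : V → Option V) (t : V) : ℕ → Option V
  | 0 => some t
  | n+1 => (seq p q t n).bind (stp p q n)

lemma seq_succ_some {n : ℕ} {v : V} (h : seq p q t (n+1) = some v) :
    ∃ u, seq p q t n = some u ∧ stp p q n u = some v := by
  rw [show seq p q t (n+1) = (seq p q t n).bind (stp p q n) from rfl] at h
  cases hs : seq p q t n with
  | none => rw [hs] at h; simp at h
  | some u => rw [hs] at h; exact ⟨u, rfl, h⟩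

lemma seq_succ_of_some {n : ℕ} {u : V} (h : seq p q t n = some u) :
    seq p q t (n+1) = stp p q n u := by
  rw [show seq p q t (n+1) = (seq p q t n).bind (stp p q n) from rfl, h]
  rfl

lemma seq_inj (hp : IsPF G p) (hq : IsPF G q) (hqt : q t = none) :
    ∀ n, ∀ m < n, ∀ v, seq p q t n = some v → seq p q t m = some v → False := by
  intro n
  induction n using Nat.strong_induction_on with
  | _ n IH =>
    intro m hmn v hn hm
    obtain ⟨n₁, rfl⟩ : ∃ n₁, n = n₁ + 1 := ⟨n - 1, by omega⟩
    obtain ⟨u, hu, hst⟩ := seq_succ_some hn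
    have huv : u ≠ v := stp_ne hp hq hst
    have hinv : stp p q n₁ v = some u := stp_invol hp hq hst
    rcases Nat.eq_zero_or_pos m with rfl | hm0
    · obtain rfl : t = v := by
        have : (some t : Option V) = some v := by rw [← hm]; rfl
        exact Option.some.inj this
      by_cases hpar : n₁ % 2 = 0
      · have hpv : p t = some u := by
          rw [stp, if_pos hpar] at hinv; exact hinv
        rcases Nat.lt_or_ge n₁ 2 with hlt | hge
        · interval_cases n₁
          · have : u = t := Option.some.inj (by rw [← hu]; rfl)
            exact huv this
          · simp at hpar
        · have h1 : seq p q t 1 = some u := by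
            rw [seq_succ_of_some (show seq p q t 0 = some t from rfl), stp, if_pos rfl]
            exact hpv
          exact IH n₁ (by omega) 1 (by omega) u hu h1
      · have hqv : q t = some u := by
          rw [stp, if_neg hpar] at hinv; exact hinv
        rw [hqt] at hqv; exact absurd hqv (by simp)
    · obtain ⟨m₁, rfl⟩ : ∃ m₁, m = m₁ + 1 := ⟨m - 1, by omega⟩
      obtain ⟨u', hu', hst'⟩ := seq_succ_some hm
      by_cases hpar : m₁ % 2 = n₁ % 2
      · have hinv' : stp p q m₁ v = some u' := stp_invol hp hq hst'
        rw [stp_congr p q hpar, hinv] at hinv'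
        obtain rfl : u = u' := Option.some.inj hinv'
        exact IH n₁ (by omega) m₁ (by omega) u hu hu'
      · rcases Nat.lt_or_ge (m₁ + 1) n₁ with hlt | hge
        · -- m + 1 ≤ n₁, consider seq (m+1)
          have hpar2 : (m₁ + 1) % 2 = n₁ % 2 := by omega
          have hs2 : seq p q t (m₁ + 2) = some u := by
            rw [seq_succ_of_some hm, stp_congr p q hpar2]
            exact hinv
          rcases Nat.lt_or_ge (m₁ + 2) n₁ with hlt2 | hge2
          · exact IH n₁ (by omega) (m₁ + 2) hlt2 u hu hs2
          · have : m₁ + 2 = n₁ := by omega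
            omega
        · have : m₁ + 1 = n₁ := by omega
          subst this
          rw [hu] at hm
          exact huv (Option.some.inj hm)

lemma seq_exists_none (hp : IsPF G p) (hq : IsPF G q) (hqt : q t = none) :
    ∃ n, seq p q t n = none := by
  by_contra hall
  push_neg at hall
  have hsome : ∀ n : ℕ, seq p q t n = some ((seq p q t n).getD t) := by
    intro n; cases hs : seq p q t n with
    | none => exact absurd hs (hall n)
    | some w => simp
  have hinj : Function.Injective (fun i : Fin (Fintype.card V + 1) => (seq p q t i).getD t) := by
    intro i j hij
    simp only at hij
    by_contra hne
    have hne' : (i : ℕ) ≠ (j : ℕ) := fun h => hne (Fin.ext h)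
    rcases hne'.lt_or_gt with h | h
    · refine seq_inj hp hq hqt j i h _ (hsome j) ?_
      rw [hsome i, hij]
    · refine seq_inj hp hq hqt i j h _ (hsome i) ?_
      rw [hsome j, hij]
  have := Fintype.card_le_of_injective _ hinj
  simp at this


lemma toggleP (hp : IsPF G p) (hq : IsPF G q) (sv : ℕ → V) (L : ℕ) (hL1 : 1 ≤ L)
    (hLpar : L % 2 = 0)
    (hstep : ∀ i < L, stp p q i (sv i) = some (sv (i+1)))
    (hstop : p (sv L) = none)
    (uniq : ∀ i j, i ≤ L → j ≤ L → sv i = sv j → i = j) :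
    ∃ p', IsPF G p' ∧ sup p' = insert (sv L) ((sup p).erase (sv 0)) := by
  classical
  set p' : V → Option V := fun v =>
    if h : ∃ i, i ≤ L ∧ sv i = v then
      (if Nat.find h = 0 then none
       else if (Nat.find h) % 2 = 1 then some (sv (Nat.find h + 1)) else some (sv (Nat.find h - 1)))
    else p v with hp'def
  have key : ∀ i, i ≤ L → p' (sv i) =
      (if i = 0 then none else if i % 2 = 1 then some (sv (i+1)) else some (sv (i-1))) := by
    intro i hi
    have h : ∃ j, j ≤ L ∧ sv j = sv i := ⟨i, hi, rfl⟩
    have hfind : Nat.find h = i := uniq _ _ (Nat.find_spec h).1 hi (Nat.find_spec h).2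
    simp only [hp'def, dif_pos h, hfind]
  have off : ∀ v, ¬(∃ i, i ≤ L ∧ sv i = v) → p' v = p v := by
    intro v hv
    simp only [hp'def, dif_neg hv]
  have stepP : ∀ i, i < L → i % 2 = 0 → p (sv i) = some (sv (i+1)) := by
    intro i hi hpar; have := hstep i hi; rwa [stp, if_pos hpar] at this
  have stepQ : ∀ i, i < L → i % 2 = 1 → q (sv i) = some (sv (i+1)) := by
    intro i hi hpar; have := hstep i hi; rw [stp, if_neg (by omega)] at this; exact this
  have hsymmP : ∀ i, 1 ≤ i → i ≤ L → i % 2 = 1 → p (sv i) = some (sv (i-1)) := by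
    intro i h1 hi hpar
    have := stepP (i-1) (by omega) (by omega)
    rw [show i - 1 + 1 = i from by omega] at this
    exact (hp this).1
  have hPF : IsPF G p' := by
    intro v w hvw
    by_cases hv : ∃ i, i ≤ L ∧ sv i = v
    · obtain ⟨i, hiL, rfl⟩ := hv
      rw [key i hiL] at hvw
      split_ifs at hvw with h0 hodd
      · obtain rfl : sv (i+1) = w := Option.some.inj hvw
        have hiL' : i < L := by omega
        constructor
        · rw [key (i+1) (by omega), if_neg (by omega), if_neg (by omega)]
          simp
        · exact (hq (stepQ i hiL' hodd)).2
      · obtain rfl : sv (i-1) = w := Option.some.inj hvw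
        constructor
        · rw [key (i-1) (by omega), if_neg (by omega), if_pos (by omega)]
          rw [show i - 1 + 1 = i from by omega]
        · have := stepQ (i-1) (by omega) (by omega)
          rw [show i - 1 + 1 = i from by omega] at this
          exact ((hq this).2).symm
    · rw [off v hv] at hvw
      have hw : ¬ ∃ j, j ≤ L ∧ sv j = w := by
        rintro ⟨j, hjL, rfl⟩
        have hpw : p (sv j) = some v := (hp hvw).1
        rcases Nat.eq_zero_or_pos j with rfl | hj0
        · have := stepP 0 (by omega) (by omega)
          rw [hpw] at this
          exact hv ⟨1, by omega, (Option.some.inj this).symm⟩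
        · rcases eq_or_ne j L with rfl | hjL'
          · rw [hstop] at hpw; exact absurd hpw (by simp)
          · by_cases hja : j % 2 = 0
            · have := stepP j (by omega) hja
              rw [hpw] at this
              exact hv ⟨j+1, by omega, (Option.some.inj this).symm⟩
            · have h2 := hsymmP j (by omega) hjL (by omega)
              rw [hpw] at h2
              exact hv ⟨j-1, by omega, (Option.some.inj h2).symm⟩
      rw [off w hw]
      exact hp hvw
  refine ⟨p', hPF, ?_⟩
  ext v
  rw [mem_sup, Finset.mem_insert, Finset.mem_erase]
  by_cases hv : ∃ i, i ≤ L ∧ sv i = v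
  · obtain ⟨i, hiL, rfl⟩ := hv
    simp only [key i hiL]
    rcases Nat.eq_zero_or_pos i with rfl | hi0
    · rw [if_pos rfl]
      constructor
      · rintro ⟨w, hw⟩; exact absurd hw (by simp)
      · rintro (h | ⟨h, -⟩)
        · exact absurd (uniq 0 L (by omega) le_rfl h) (by omega)
        · exact absurd rfl h
    · rcases eq_or_ne i L with rfl | hiL'
      · rw [if_neg (by omega), if_neg (by omega)]
        exact ⟨fun _ => Or.inl rfl, fun _ => ⟨_, rfl⟩⟩
      · rw [if_neg (by omega)]
        have hmem : sv i ∈ sup p := by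
          by_cases hpar : i % 2 = 1
          · exact mem_sup.2 ⟨_, hsymmP i hi0 hiL hpar⟩
          · exact mem_sup.2 ⟨_, stepP i (by omega) (by omega)⟩
        have hne0 : sv i ≠ sv 0 := fun he => by
          have := uniq i 0 hiL (by omega) he; omega
        constructor
        · intro _; exact Or.inr ⟨hne0, hmem⟩
        · intro _
          by_cases hpar : i % 2 = 1
          · rw [if_pos hpar]; exact ⟨_, rfl⟩
          · rw [if_neg hpar]; exact ⟨_, rfl⟩
  · rw [off v hv]
    have hvL : v ≠ sv L := fun he => hv ⟨L, le_rfl, he.symm⟩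
    have hv0 : v ≠ sv 0 := fun he => hv ⟨0, by omega, he.symm⟩
    rw [← mem_sup]
    exact ⟨fun h => Or.inr ⟨hv0, h⟩, fun h => by rcases h with h | ⟨-, h⟩; exacts [absurd h hvL, h]⟩

lemma toggleQ (hp : IsPF G p) (hq : IsPF G q) (sv : ℕ → V) (L : ℕ) (hL1 : 1 ≤ L)
    (hLpar : L % 2 = 1)
    (hstep : ∀ i < L, stp p q i (sv i) = some (sv (i+1)))
    (hstop : q (sv L) = none) (hq0 : q (sv 0) = none)
    (uniq : ∀ i j, i ≤ L → j ≤ L → sv i = sv j → i = j) :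
    ∃ q', IsPF G q' ∧ sup q' = insert (sv 0) (insert (sv L) (sup q)) := by
  classical
  set q' : V → Option V := fun v =>
    if h : ∃ i, i ≤ L ∧ sv i = v then
      (if (Nat.find h) % 2 = 0 then some (sv (Nat.find h + 1)) else some (sv (Nat.find h - 1)))
    else q v with hq'def
  have key : ∀ i, i ≤ L → q' (sv i) =
      (if i % 2 = 0 then some (sv (i+1)) else some (sv (i-1))) := by
    intro i hi
    have h : ∃ j, j ≤ L ∧ sv j = sv i := ⟨i, hi, rfl⟩
    have hfind : Nat.find h = i := uniq _ _ (Nat.find_spec h).1 hi (Nat.find_spec h).2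
    simp only [hq'def, dif_pos h, hfind]
  have off : ∀ v, ¬(∃ i, i ≤ L ∧ sv i = v) → q' v = q v := by
    intro v hv
    simp only [hq'def, dif_neg hv]
  have stepP : ∀ i, i < L → i % 2 = 0 → p (sv i) = some (sv (i+1)) := by
    intro i hi hpar; have := hstep i hi; rwa [stp, if_pos hpar] at this
  have stepQ : ∀ i, i < L → i % 2 = 1 → q (sv i) = some (sv (i+1)) := by
    intro i hi hpar; have := hstep i hi; rw [stp, if_neg (by omega)] at this; exact this
  have hsymmQ : ∀ i, 1 ≤ i → i ≤ L → i % 2 = 0 → q (sv i) = some (sv (i-1)) := by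
    intro i h1 hi hpar
    have := stepQ (i-1) (by omega) (by omega)
    rw [show i - 1 + 1 = i from by omega] at this
    exact (hq this).1
  have hQF : IsPF G q' := by
    intro v w hvw
    by_cases hv : ∃ i, i ≤ L ∧ sv i = v
    · obtain ⟨i, hiL, rfl⟩ := hv
      rw [key i hiL] at hvw
      split_ifs at hvw with heven
      · obtain rfl : sv (i+1) = w := Option.some.inj hvw
        have hiL' : i < L := by omega
        constructor
        · rw [key (i+1) (by omega), if_neg (by omega)]
          simp
        · exact (hp (stepP i hiL' heven)).2
      · obtain rfl : sv (i-1) = w := Option.some.inj hvw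
        have hi1 : 1 ≤ i := by omega
        constructor
        · rw [key (i-1) (by omega), if_pos (by omega)]
          rw [show i - 1 + 1 = i from by omega]
        · have := stepP (i-1) (by omega) (by omega)
          rw [show i - 1 + 1 = i from by omega] at this
          exact ((hp this).2).symm
    · rw [off v hv] at hvw
      have hw : ¬ ∃ j, j ≤ L ∧ sv j = w := by
        rintro ⟨j, hjL, rfl⟩
        have hqw : q (sv j) = some v := (hq hvw).1
        rcases Nat.eq_zero_or_pos j with rfl | hj0
        · rw [hq0] at hqw; exact absurd hqw (by simp)
        · rcases eq_or_ne j L with rfl | hjL'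
          · rw [hstop] at hqw; exact absurd hqw (by simp)
          · by_cases hja : j % 2 = 1
            · have := stepQ j (by omega) hja
              rw [hqw] at this
              exact hv ⟨j+1, by omega, (Option.some.inj this).symm⟩
            · have h2 := hsymmQ j (by omega) hjL (by omega)
              rw [hqw] at h2
              exact hv ⟨j-1, by omega, (Option.some.inj h2).symm⟩
      rw [off w hw]
      exact hq hvw
  refine ⟨q', hQF, ?_⟩
  ext v
  rw [mem_sup, Finset.mem_insert, Finset.mem_insert]
  by_cases hv : ∃ i, i ≤ L ∧ sv i = v
  · obtain ⟨i, hiL, rfl⟩ := hv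
    simp only [key i hiL]
    constructor
    · intro _
      rcases Nat.eq_zero_or_pos i with rfl | hi0
      · exact Or.inl rfl
      · rcases eq_or_ne i L with rfl | hiL'
        · exact Or.inr (Or.inl rfl)
        · refine Or.inr (Or.inr (mem_sup.2 ?_))
          by_cases hpar : i % 2 = 1
          · exact ⟨_, stepQ i (by omega) hpar⟩
          · exact ⟨_, hsymmQ i hi0 hiL (by omega)⟩
    · intro _
      by_cases hpar : i % 2 = 0
      · rw [if_pos hpar]; exact ⟨_, rfl⟩
      · rw [if_neg hpar]; exact ⟨_, rfl⟩
  · rw [off v hv]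
    have hvL : v ≠ sv L := fun he => hv ⟨L, le_rfl, he.symm⟩
    have hv0 : v ≠ sv 0 := fun he => hv ⟨0, by omega, he.symm⟩
    rw [← mem_sup]
    constructor
    · exact fun h => Or.inr (Or.inr h)
    · rintro (h | h | h)
      · exact absurd h.symm (Ne.symm hv0)
      · exact absurd h hvL
      · exact h

lemma exchange (hp : IsPF G p) (hq : IsPF G q)
    (hmaxq : ∀ r, IsPF G r → (sup r).card ≤ (sup q).card)
    (htp : t ∈ sup p) (htq : t ∉ sup q) :
    ∃ p' x, IsPF G p' ∧ x ∉ sup p ∧ x ≠ t ∧ sup p' = insert x ((sup p).erase t) := by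
  classical
  have hqt : q t = none := not_mem_sup.1 htq
  obtain ⟨w1, hw1⟩ := mem_sup.1 htp
  have hex := seq_exists_none hp hq hqt
  set N := Nat.find hex with hNdef
  have hN : seq p q t N = none := Nat.find_spec hex
  have hN0 : N ≠ 0 := by
    intro h; rw [h] at hN; exact absurd hN (by simp [seq])
  have hN1 : N ≠ 1 := by
    intro h
    rw [h, seq_succ_of_some (show seq p q t 0 = some t from rfl), stp, if_pos rfl, hw1] at hN
    exact absurd hN (by simp)
  set L := N - 1 with hLdef
  have hL1 : 1 ≤ L := by omega
  have hLnone : seq p q t (L+1) = none := by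
    rw [show L + 1 = N from by omega]; exact hN
  have hLsome : ∀ i, i ≤ L → seq p q t i ≠ none := by
    intro i hi
    exact Nat.find_min hex (by omega)
  set sv : ℕ → V := fun i => (seq p q t i).getD t with hsvdef
  have hsv : ∀ i, i ≤ L → seq p q t i = some (sv i) := by
    intro i hi
    cases hs : seq p q t i with
    | none => exact absurd hs (hLsome i hi)
    | some w => simp [hsvdef, hs]
  have hsv0 : sv 0 = t := rfl
  have uniq : ∀ i j, i ≤ L → j ≤ L → sv i = sv j → i = j := by
    intro i j hi hj hij
    by_contra hne
    rcases Nat.lt_or_ge i j with h | h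
    · exact seq_inj hp hq hqt j i h (sv j) (hsv j hj) (by rw [hsv i hi, hij])
    · exact seq_inj hp hq hqt i j (by omega) (sv i) (hsv i hi) (by rw [hsv j hj, hij])
  have hstep : ∀ i, i < L → stp p q i (sv i) = some (sv (i+1)) := by
    intro i hi
    have h1 : seq p q t (i+1) = some (sv (i+1)) := hsv _ (by omega)
    rw [seq_succ_of_some (hsv i (by omega))] at h1
    exact h1
  have hstop : stp p q L (sv L) = none := by
    rw [← seq_succ_of_some (hsv L le_rfl)]
    exact hLnone
  have hLne : sv L ≠ t := by
    intro he
    have := uniq L 0 le_rfl (by omega) (by rw [he, hsv0])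
    omega
  by_cases hLpar : L % 2 = 0
  · have hstopP : p (sv L) = none := by rwa [stp, if_pos hLpar] at hstop
    obtain ⟨p', hPF, hsup⟩ := toggleP hp hq sv L hL1 hLpar (fun i hi => hstep i hi) hstopP uniq
    exact ⟨p', sv L, hPF, not_mem_sup.2 hstopP, hLne, by rwa [hsv0] at hsup⟩
  · have hstopQ : q (sv L) = none := by rwa [stp, if_neg hLpar] at hstop
    obtain ⟨q', hQF, hsupq⟩ := toggleQ hp hq sv L hL1 (by omega) (fun i hi => hstep i hi) hstopQ
      (by rwa [hsv0]) uniq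
    exfalso
    have hcard : (sup q').card = (sup q).card + 2 := by
      rw [hsupq, Finset.card_insert_of_notMem, Finset.card_insert_of_notMem]
      · exact not_mem_sup.2 hstopQ
      · simp only [Finset.mem_insert]
        push_neg
        exact ⟨fun he => hLne (by rw [← he, hsv0]), by rw [hsv0]; exact htq⟩
    have := hmaxq q' hQF
    omega

lemma augment (hp : IsPF G p) {u v : V} (hu : p u = none) (hv : p v = none)
    (huv : G.Adj u v) :
    ∃ p', IsPF G p' ∧ sup p' = insert u (insert v (sup p)) := by
  classical
  have hne : u ≠ v := huv.ne
  set p' : V → Option V := fun w => if w = u then some v else if w = v then some u else p w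
    with hp'def
  have hPF : IsPF G p' := by
    intro a b hab
    simp only [hp'def] at hab
    split_ifs at hab with h1 h2
    · subst h1
      obtain rfl : v = b := Option.some.inj hab
      constructor
      · simp [hp'def, if_neg hne.symm]
      · exact huv
    · subst h2
      obtain rfl : u = b := Option.some.inj hab
      constructor
      · simp [hp'def]
      · exact huv.symm
    · have hb : b ≠ u ∧ b ≠ v := by
        constructor
        · intro he; subst he
          have := (hp hab).1
          rw [hu] at this; exact absurd this (by simp)
        · intro he; subst he
          have := (hp hab).1
          rw [hv] at this; exact absurd this (by simp)
      constructor
      · simp only [hp'def, if_neg hb.1, if_neg hb.2]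
        exact (hp hab).1
      · exact (hp hab).2
  refine ⟨p', hPF, ?_⟩
  ext w
  rw [mem_sup, Finset.mem_insert, Finset.mem_insert]
  simp only [hp'def]
  split_ifs with h1 h2
  · subst h1; simp
  · subst h2; simp
  · rw [← mem_sup]
    constructor
    · exact fun h => Or.inr (Or.inr h)
    · rintro (h | h | h)
      · exact absurd h h1
      · exact absurd h h2
      · exact h

end Walk

section Counting

universe u

/-- number of odd connected components -/
noncomputable def oddCount {W : Type u} (H : SimpleGraph W) : ℕ :=
  Nat.card {c : H.ConnectedComponent // Odd c.supp.ncard}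

lemma oddCount_eq_of_iso {W : Type u} {W' : Type u} {H : SimpleGraph W} {H' : SimpleGraph W'}
    (φ : H ≃g H') : oddCount H = oddCount H' := by
  apply Nat.card_congr
  refine Equiv.subtypeEquiv φ.connectedComponentEquiv ?_
  intro c
  have h1 : Nat.card c.supp = Nat.card (φ.connectedComponentEquiv c).supp :=
    Nat.card_congr (ConnectedComponent.isoEquivSupp φ c)
  rw [Nat.card_coe_set_eq, Nat.card_coe_set_eq] at h1
  rw [h1]

lemma oddCount_induce_congr {V : Type u} (G : SimpleGraph V) {s s' : Set V} (h : s = s') :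
    oddCount (G.induce s) = oddCount (G.induce s') := by subst h; rfl

/-- composing two induced subgraphs -/
noncomputable def induceInduceIso {V : Type u} (G : SimpleGraph V) (s : Set V) (B : Set s) :
    ((G.induce s).induce B) ≃g G.induce (Subtype.val '' B) where
  toEquiv := Equiv.Set.image Subtype.val B Subtype.val_injective
  map_rel_iff' := by
    intro a b
    simp [Equiv.Set.image, Equiv.Set.imageOfInjOn]

end Counting

section Easy

variable {G : SimpleGraph V}

lemma easy_key {S : Finset V} {p : V → Option V} (hp : IsPF G p)
    (c : (G.induce ((S : Set V)ᶜ)).ConnectedComponent) (hodd : Odd c.supp.ncard) :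
    ∃ v : V, v ∈ Subtype.val '' c.supp ∧ (p v = none ∨ ∃ w, w ∈ S ∧ p v = some w) := by
  by_contra hno
  push_neg at hno
  have hinv : ∀ v ∈ Subtype.val '' c.supp,
      (fun u => (p u).getD u) v ∈ Subtype.val '' c.supp ∧
      (fun u => (p u).getD u) v ≠ v ∧
      (fun u => (p u).getD u) ((fun u => (p u).getD u) v) = v := by
    intro v hv
    obtain ⟨hpn, hS⟩ := hno v hv
    obtain ⟨w, hw⟩ : ∃ w, p v = some w := by
      cases h : p v with
      | none => exact absurd h hpn
      | some w => exact ⟨w, rfl⟩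
    have hwS : w ∉ S := fun hmem => (hS w hmem) hw
    simp only [hw, Option.getD_some]
    obtain ⟨x, hx, hxv⟩ := hv
    have hws : w ∈ ((S : Set V)ᶜ) := by simpa using hwS
    have hadj : (G.induce ((S : Set V)ᶜ)).Adj x ⟨w, hws⟩ := by
      simp only [comap_adj, Function.Embedding.coe_subtype]
      rw [hxv]
      exact (hp hw).2
    have hmk : (G.induce ((S : Set V)ᶜ)).connectedComponentMk ⟨w, hws⟩ = c := by
      rw [← ConnectedComponent.connectedComponentMk_eq_of_adj hadj]
      exact hx
    refine ⟨⟨⟨w, hws⟩, hmk, rfl⟩, ?_, ?_⟩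
    · exact (hp.ne hw).symm
    · rw [(hp hw).1]; simp
  have heven : Even ((Subtype.val '' c.supp : Set V).ncard) :=
    even_ncard_of_invol _ _ hinv
  rw [Set.ncard_image_of_injective _ Subtype.val_injective] at heven
  exact (Nat.not_even_iff_odd.mpr hodd) heven

lemma easy_bound {p : V → Option V} (hp : IsPF G p) (S : Finset V) :
    oddCount (G.induce ((S : Set V)ᶜ)) + (sup p).card ≤ S.card + Fintype.card V := by
  classical
  set OC := {c : (G.induce ((S : Set V)ᶜ)).ConnectedComponent // Odd c.supp.ncard} with hOC
  have hkey : ∀ c : OC, ∃ v : V, v ∈ Subtype.val '' c.1.supp ∧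
      (p v = none ∨ ∃ w, w ∈ S ∧ p v = some w) := fun c => easy_key hp c.1 c.2
  set f1 : OC → V := fun c => (hkey c).choose with hf1
  have hf1supp : ∀ c : OC, f1 c ∈ Subtype.val '' c.1.supp := fun c => (hkey c).choose_spec.1
  have hf1p : ∀ c : OC, p (f1 c) = none ∨ ∃ w, w ∈ S ∧ p (f1 c) = some w :=
    fun c => (hkey c).choose_spec.2
  have hf1inj : Function.Injective f1 := by
    intro c c' he
    obtain ⟨x, hx, hxv⟩ := hf1supp c
    obtain ⟨x', hx', hxv'⟩ := hf1supp c'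
    have hxx : x = x' := Subtype.val_injective (by rw [hxv, hxv', he])
    subst hxx
    apply Subtype.ext
    rw [← hx, ← hx']
  have hmem : ∀ c : OC, ¬ p (f1 c) = none → (p (f1 c)).getD (f1 c) ∈ S := by
    intro c h
    obtain ⟨w, hwS, hpw⟩ := (hf1p c).resolve_left h
    rw [hpw]; simpa using hwS
  set F : OC → ({v : V // p v = none} ⊕ {w : V // w ∈ S}) := fun c =>
    if h : p (f1 c) = none then Sum.inl ⟨f1 c, h⟩ else Sum.inr ⟨_, hmem c h⟩ with hF
  have hFinj : Function.Injective F := by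
    intro c c' he
    simp only [hF] at he
    split_ifs at he with h1 h2 h2
    · exact hf1inj (congrArg Subtype.val (Sum.inl.inj he))
    · have := Sum.inr.inj he
      have heq : (p (f1 c)).getD (f1 c) = (p (f1 c')).getD (f1 c') := congrArg Subtype.val this
      obtain ⟨w, hw⟩ : ∃ w, p (f1 c) = some w := by
        cases h : p (f1 c) with
        | none => exact absurd h h1
        | some w => exact ⟨w, rfl⟩
      obtain ⟨w', hw'⟩ : ∃ w', p (f1 c') = some w' := by
        cases h : p (f1 c') with
        | none => exact absurd h h2
        | some w => exact ⟨w, rfl⟩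
      rw [hw, hw'] at heq
      simp only [Option.getD_some] at heq
      subst heq
      have e1 : p w = some (f1 c) := (hp hw).1
      have e2 : p w = some (f1 c') := (hp hw').1
      rw [e1] at e2
      exact hf1inj (Option.some.inj e2)
  have hcard : Nat.card OC ≤ Nat.card ({v : V // p v = none} ⊕ {w : V // w ∈ S}) :=
    Nat.card_le_card_of_injective F hFinj
  rw [Nat.card_sum] at hcard
  have h1 : Nat.card {v : V // p v = none} = Fintype.card V - (sup p).card := by
    rw [Nat.card_eq_fintype_card]
    have : ∀ v : V, p v = none ↔ v ∈ (sup p)ᶜ := by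
      intro v; rw [Finset.mem_compl, not_mem_sup]
    rw [Fintype.card_subtype]
    rw [show Finset.univ.filter (fun v => p v = none) = (sup p)ᶜ by ext v; simp [this v]]
    rw [Finset.card_compl]
  have h2 : Nat.card {w : V // w ∈ S} = S.card := by
    rw [Nat.card_eq_fintype_card]
    exact Fintype.card_coe S
  have h3 : (sup p).card ≤ Fintype.card V := by
    simpa using Finset.card_le_univ (sup p)
  have : oddCount (G.induce ((S : Set V)ᶜ)) = Nat.card OC := rfl
  omega

end Easy

section Transfer

variable {G : SimpleGraph V} {s : Set V} [DecidablePred (· ∈ s)]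

def liftPF (s : Set V) [DecidablePred (· ∈ s)] (p' : ↥s → Option ↥s) : V → Option V :=
  fun v => if h : v ∈ s then (p' ⟨v, h⟩).map Subtype.val else none

lemma liftPF_isPF {p' : ↥s → Option ↥s} (h : IsPF (G.induce s) p') :
    IsPF G (liftPF s p') := by
  intro v w hvw
  unfold liftPF at hvw
  split_ifs at hvw with hv
  · cases hp' : p' ⟨v, hv⟩ with
    | none => rw [hp'] at hvw; exact absurd hvw (by simp)
    | some x =>
      rw [hp'] at hvw
      simp only [Option.map_some] at hvw
      obtain rfl : (x : V) = w := Option.some.inj hvw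
      obtain ⟨hsymm, hadj⟩ := h hp'
      constructor
      · unfold liftPF
        rw [dif_pos x.2]
        have : (⟨(x : V), x.2⟩ : ↥s) = x := rfl
        rw [this, hsymm]
        simp
      · exact hadj

lemma sup_liftPF (p' : ↥s → Option ↥s) :
    sup (liftPF s p') = (sup p').image Subtype.val := by
  ext v
  rw [mem_sup, Finset.mem_image]
  constructor
  · rintro ⟨w, hw⟩
    unfold liftPF at hw
    split_ifs at hw with hv
    · cases hp' : p' ⟨v, hv⟩ with
      | none => rw [hp'] at hw; exact absurd hw (by simp)
      | some x => exact ⟨⟨v, hv⟩, mem_sup.2 ⟨x, hp'⟩, rfl⟩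
  · rintro ⟨x, hx, rfl⟩
    obtain ⟨y, hy⟩ := mem_sup.1 hx
    refine ⟨y, ?_⟩
    unfold liftPF
    rw [dif_pos x.2]
    have : (⟨(x : V), x.2⟩ : ↥s) = x := rfl
    rw [this, hy]
    simp

lemma card_sup_liftPF (p' : ↥s → Option ↥s) :
    (sup (liftPF s p')).card = (sup p').card := by
  rw [sup_liftPF, Finset.card_image_of_injective _ Subtype.val_injective]

lemma liftPF_avoid {p' : ↥s → Option ↥s} {v : V} (hv : v ∉ s) :
    v ∉ sup (liftPF s p') := by
  rw [not_mem_sup]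
  unfold liftPF
  rw [dif_neg hv]

def restPF (s : Set V) [DecidablePred (· ∈ s)] (p : V → Option V) : ↥s → Option ↥s :=
  fun x => (p ↑x).bind (fun w => if h : w ∈ s then some ⟨w, h⟩ else none)

lemma restPF_some {p : V → Option V} {x y : ↥s} :
    restPF s p x = some y ↔ p ↑x = some ↑y := by
  unfold restPF
  cases h : p ↑x with
  | none => simp
  | some w =>
    rw [Option.bind_some]
    split_ifs with hw
    · constructor
      · intro he
        have := Option.some.inj he
        rw [← this]
      · intro he
        have : w = ↑y := Option.some.inj he
        subst this
        rfl
    · constructor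
      · intro he; exact absurd he (by simp)
      · intro he
        exact absurd ((Option.some.inj he) ▸ y.2) hw

lemma restPF_isPF {p : V → Option V} (hp : IsPF G p) (hsub : ∀ v ∈ sup p, v ∈ s) :
    IsPF (G.induce s) (restPF s p) := by
  intro x y hxy
  rw [restPF_some] at hxy
  obtain ⟨hsymm, hadj⟩ := hp hxy
  constructor
  · rw [restPF_some]
    exact hsymm
  · simp only [comap_adj, Function.Embedding.coe_subtype]
    exact hadj

lemma sup_restPF {p : V → Option V} (hp : IsPF G p) (hsub : ∀ v ∈ sup p, v ∈ s) :
    (sup (restPF s p)).image Subtype.val = sup p := by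
  ext v
  rw [Finset.mem_image]
  constructor
  · rintro ⟨x, hx, rfl⟩
    obtain ⟨y, hy⟩ := mem_sup.1 hx
    rw [restPF_some] at hy
    exact mem_sup.2 ⟨_, hy⟩
  · intro hv
    obtain ⟨w, hw⟩ := mem_sup.1 hv
    have hvs : v ∈ s := hsub v hv
    have hws : w ∈ s := hsub w (mem_sup.2 ⟨v, (hp hw).1⟩)
    refine ⟨⟨v, hvs⟩, mem_sup.2 ⟨⟨w, hws⟩, ?_⟩, rfl⟩
    rw [restPF_some]
    exact hw

lemma card_sup_restPF {p : V → Option V} (hp : IsPF G p) (hsub : ∀ v ∈ sup p, v ∈ s) :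
    (sup (restPF s p)).card = (sup p).card := by
  rw [← sup_restPF hp hsub, Finset.card_image_of_injective _ Subtype.val_injective]

end Transfer

section Gallai

variable {G : SimpleGraph V}

lemma card_missed (p : V → Option V) :
    Nat.card {v : V // p v = none} = Fintype.card V - (sup p).card := by
  classical
  rw [Nat.card_eq_fintype_card, Fintype.card_subtype]
  rw [show Finset.univ.filter (fun v => p v = none) = (sup p)ᶜ by
    ext v; simp [Finset.mem_compl, not_mem_sup]]
  rw [Finset.card_compl]

lemma gallai
    (hyp : ∀ v : V, ∃ q, IsPF G q ∧ (∀ r, IsPF G r → (sup r).card ≤ (sup q).card) ∧ v ∉ sup q)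
    {p : V → Option V} (hp : IsPF G p)
    (hmax : ∀ r, IsPF G r → (sup r).card ≤ (sup p).card)
    {u v : V} (hu : u ∉ sup p) (hv : v ∉ sup p) (huv : u ≠ v) : ¬ G.Reachable u v := by
  intro hreach
  classical
  have hPex : ∃ d, ∃ p', IsPF G p' ∧ (∀ r, IsPF G r → (sup r).card ≤ (sup p').card) ∧
      ∃ a b, a ∉ sup p' ∧ b ∉ sup p' ∧ a ≠ b ∧ G.Reachable a b ∧ G.dist a b = d :=
    ⟨G.dist u v, p, hp, hmax, u, v, hu, hv, huv, hreach, rfl⟩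
  set d := Nat.find hPex with hd
  obtain ⟨p', hp', hmax', a, b, ha, hb, hab, hre, hdist⟩ := Nat.find_spec hPex
  rw [← hd] at hdist
  have hd0 : d ≠ 0 := by
    intro h0
    rw [h0] at hdist
    exact hab ((hre.dist_eq_zero_iff).mp hdist)
  rcases eq_or_ne d 1 with hd1 | hd1
  · have hadj : G.Adj a b := SimpleGraph.dist_eq_one_iff_adj.mp (hd1 ▸ hdist)
    obtain ⟨p'', hp'', hsup''⟩ := augment hp' (not_mem_sup.1 ha) (not_mem_sup.1 hb) hadj
    have hcard'' : (sup p'').card = (sup p').card + 2 := by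
      rw [hsup'', Finset.card_insert_of_notMem (by simp [ha, hab]),
        Finset.card_insert_of_notMem hb]
    have := hmax' p'' hp''
    omega
  · have hd2 : 2 ≤ d := by omega
    obtain ⟨wlk, hlen⟩ := exists_walk_of_dist_ne_zero (show G.dist a b ≠ 0 by omega)
    obtain ⟨t, hadj_at, tail, hwlk⟩ := SimpleGraph.Walk.exists_eq_cons_of_ne hab wlk
    have hlen' : tail.length + 1 = d := by
      rw [← hdist, ← hlen, hwlk, SimpleGraph.Walk.length_cons]
    have hdtb : G.dist t b ≤ d - 1 := by
      have := SimpleGraph.dist_le tail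
      omega
    have htsup : t ∈ sup p' := by
      by_contra htp
      have h1 : G.dist a t = 1 := SimpleGraph.dist_eq_one_iff_adj.mpr hadj_at
      exact (Nat.find_min hPex (show 1 < d by omega))
        ⟨p', hp', hmax', a, t, ha, htp, hadj_at.ne, hadj_at.reachable, h1⟩
    obtain ⟨q, hq, hmaxq, htq⟩ := hyp t
    obtain ⟨p2, x, hp2, hx, hxt, hsup2⟩ := exchange hp' hq hmaxq htsup htq
    have hcard2 : (sup p2).card = (sup p').card := by
      rw [hsup2, Finset.card_insert_of_notMem
        (fun hmem => hx (Finset.mem_of_mem_erase hmem)),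
        Finset.card_erase_of_mem htsup]
      have : 1 ≤ (sup p').card := Finset.card_pos.mpr ⟨t, htsup⟩
      omega
    have hmax2 : ∀ r, IsPF G r → (sup r).card ≤ (sup p2).card := by
      intro r hr; rw [hcard2]; exact hmax' r hr
    have htp2 : t ∉ sup p2 := by
      rw [hsup2]
      simp only [Finset.mem_insert, Finset.mem_erase]
      push_neg
      refine ⟨Ne.symm hxt, ?_⟩
      intro h; exact absurd rfl h
    set y := if x = a then b else a with hy
    have hyx : y ∉ sup p' ∧ y ≠ x := by
      rw [hy]; split_ifs with hxa
      · exact ⟨hb, fun h => hab (by rw [← hxa, h])⟩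
      · exact ⟨ha, fun h => hxa h.symm⟩
    have hyp2 : y ∉ sup p2 := by
      rw [hsup2]
      simp only [Finset.mem_insert, Finset.mem_erase]
      push_neg
      exact ⟨hyx.2, fun _ hmem => absurd hmem hyx.1⟩
    have hty : t ≠ y := by
      intro h; rw [← h] at hyx; exact hyx.1 htsup
    have hrty : G.Reachable t y := by
      rw [hy]; split_ifs
      · exact ⟨tail⟩
      · exact hadj_at.symm.reachable
    have hdty : G.dist t y < d := by
      rw [hy]; split_ifs
      · omega
      · have : G.dist t a = 1 := SimpleGraph.dist_eq_one_iff_adj.mpr hadj_at.symm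
        omega
    exact (Nat.find_min hPex hdty) ⟨p2, hp2, hmax2, t, y, htp2, hyp2, hty, hrty, rfl⟩

lemma case2_bound
    (hyp : ∀ v : V, ∃ q, IsPF G q ∧ (∀ r, IsPF G r → (sup r).card ≤ (sup q).card) ∧ v ∉ sup q)
    {p : V → Option V} (hp : IsPF G p)
    (hmax : ∀ r, IsPF G r → (sup r).card ≤ (sup p).card) :
    Fintype.card V ≤ oddCount G + (sup p).card := by
  classical
  have hodd : ∀ v : V, p v = none → Odd (G.connectedComponentMk v).supp.ncard := by
    intro v hvn
    set c := G.connectedComponentMk v with hc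
    have hvc : v ∈ c.supp := by rw [ConnectedComponent.mem_supp_iff]
    have heven : Even ((c.supp \ {v}).ncard) := by
      apply even_ncard_of_invol _ (fun w => (p w).getD w)
      intro w hw
      obtain ⟨hwc, hwv'⟩ := hw
      have hwv : w ≠ v := by simpa using hwv'
      have hwre : G.Reachable w v := by
        rw [ConnectedComponent.mem_supp_iff, hc] at hwc
        exact (SimpleGraph.ConnectedComponent.eq).mp hwc
      have hwsup : w ∈ sup p := by
        by_contra hwn
        exact gallai hyp hp hmax hwn (not_mem_sup.2 hvn) hwv hwre
      obtain ⟨z, hz⟩ := mem_sup.1 hwsup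
      simp only [hz, Option.getD_some]
      have hzw : G.Adj z w := ((hp hz).2).symm
      have hzc : z ∈ c.supp := by
        rw [ConnectedComponent.mem_supp_iff]
        rw [ConnectedComponent.connectedComponentMk_eq_of_adj hzw]
        rw [ConnectedComponent.mem_supp_iff] at hwc
        exact hwc
      have hzv : z ≠ v := by
        intro h
        rw [h] at hz
        have := (hp hz).1
        rw [hvn] at this
        exact absurd this (by simp)
      refine ⟨⟨hzc, by simpa using hzv⟩, (hp.ne hz).symm, ?_⟩
      rw [(hp hz).1]
      simp
    have hsplit : (c.supp \ {v}).ncard + 1 = c.supp.ncard :=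
      Set.ncard_diff_singleton_add_one hvc
    rw [← hsplit]
    exact Even.add_one heven
  set J : {v : V // p v = none} → {c : G.ConnectedComponent // Odd c.supp.ncard} :=
    fun v => ⟨G.connectedComponentMk v.1, hodd v.1 v.2⟩ with hJ
  have hJinj : Function.Injective J := by
    intro a b he
    simp only [hJ, Subtype.mk.injEq] at he
    by_contra hne
    have hne' : a.1 ≠ b.1 := fun h => hne (Subtype.ext h)
    exact gallai hyp hp hmax (not_mem_sup.2 a.2) (not_mem_sup.2 b.2) hne'
      ((SimpleGraph.ConnectedComponent.eq).mp he)
  have h1 : Nat.card {v : V // p v = none} ≤ Nat.card {c : G.ConnectedComponent // Odd c.supp.ncard} :=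
    Nat.card_le_card_of_injective J hJinj
  rw [card_missed p] at h1
  have h3 : (sup p).card ≤ Fintype.card V := by
    simpa using Finset.card_le_univ (sup p)
  have : oddCount G = Nat.card {c : G.ConnectedComponent // Odd c.supp.ncard} := rfl
  omega

end Gallai

section Hard

universe v

noncomputable def minf {W : Type v} [Fintype W] [DecidableEq W] (G : SimpleGraph W) : ℤ :=
  Finset.univ.inf' Finset.univ_nonempty (fun S : Finset W =>
    (S.card : ℤ) - (oddCount (G.induce ((S : Set W)ᶜ)) : ℤ) + (Fintype.card W : ℤ))

lemma minf_le {W : Type v} [Fintype W] [DecidableEq W] (G : SimpleGraph W) (S : Finset W) :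
    minf G ≤ (S.card : ℤ) - (oddCount (G.induce ((S : Set W)ᶜ)) : ℤ) + (Fintype.card W : ℤ) :=
  Finset.inf'_le _ (Finset.mem_univ S)

lemma compl_insert_image {v₀ : V} (S' : Finset ↥({v₀}ᶜ : Set V)) :
    ((insert v₀ (S'.image Subtype.val) : Finset V) : Set V)ᶜ =
      Subtype.val '' ((S' : Set ↥({v₀}ᶜ : Set V))ᶜ) := by
  ext w
  simp only [Finset.coe_insert, Set.mem_compl_iff, Set.mem_insert_iff, Finset.mem_coe,
    Finset.mem_image, Set.mem_image, not_or, not_exists, not_and]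
  constructor
  · rintro ⟨hw0, hwS⟩
    have hws : w ∈ ({v₀}ᶜ : Set V) := by simp [hw0]
    refine ⟨⟨w, hws⟩, ?_, rfl⟩
    intro hmem
    exact hwS ⟨w, hws⟩ hmem rfl
  · rintro ⟨x, hx, rfl⟩
    constructor
    · intro h
      exact x.2 (by simp [h])
    · intro x' hx' hxx
      exact hx (by rwa [Subtype.val_injective hxx] at hx')

lemma hard_aux : ∀ (n : ℕ) (W : Type v) (i1 : Fintype W) (i2 : DecidableEq W)
    (G : SimpleGraph W), Fintype.card W ≤ n →
    ∀ p : W → Option W, IsPF G p → (∀ q, IsPF G q → (sup q).card ≤ (sup p).card) →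
    minf G ≤ ((sup p).card : ℤ) := by
  intro n
  induction n with
  | zero =>
    intro W i1 i2 G hcard p hp hmax
    have h1 := minf_le G ∅
    have hV0 : Fintype.card W = 0 := Nat.le_zero.mp hcard
    have h2 : (0:ℤ) ≤ (oddCount (G.induce (((∅ : Finset W) : Set W)ᶜ)) : ℤ) := Nat.cast_nonneg _
    have h3 : (0:ℤ) ≤ ((sup p).card : ℤ) := Nat.cast_nonneg _
    simp only [Finset.card_empty, Nat.cast_zero, hV0] at h1
    linarith
  | succ n IH =>
    intro W i1 i2 G hcard p hp hmax
    by_cases hc1 : ∃ v₀ : W, ∀ q, IsPF G q →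
        (∀ r, IsPF G r → (sup r).card ≤ (sup q).card) → v₀ ∈ sup q
    · obtain ⟨v₀, hv₀⟩ := hc1
      have hv₀p : v₀ ∈ sup p := hv₀ p hp hmax
      obtain ⟨w₀, hw₀⟩ := mem_sup.1 hv₀p
      have hv₀w₀ : v₀ ≠ w₀ := hp.ne hw₀
      have hw₀sup : w₀ ∈ sup p := mem_sup.2 ⟨v₀, (hp hw₀).1⟩
      have hA2 : 2 ≤ (sup p).card := by
        have hsubs : ({v₀, w₀} : Finset W) ⊆ sup p := by
          intro z hz
          simp only [Finset.mem_insert, Finset.mem_singleton] at hz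
          rcases hz with rfl | rfl
          exacts [hv₀p, hw₀sup]
        calc 2 = ({v₀, w₀} : Finset W).card := by
              rw [Finset.card_insert_of_notMem (by simpa using hv₀w₀), Finset.card_singleton]
        _ ≤ (sup p).card := Finset.card_le_card hsubs
      set s : Set W := {v₀}ᶜ with hs
      haveI hdec : DecidablePred (· ∈ s) := fun v => decidable_of_iff (¬ v = v₀) (by simp [hs])
      have h1W : 1 ≤ Fintype.card W := Fintype.card_pos_iff.mpr ⟨v₀⟩
      have hcards : Fintype.card ↥s = Fintype.card W - 1 := by
        have e : Fintype.card ↥s = Fintype.card {x : W // ¬ x = v₀} :=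
          Fintype.card_congr (Equiv.subtypeEquivRight (fun x => by simp [hs]))
        rw [e, Fintype.card_subtype_compl, Fintype.card_subtype_eq]
      set pdel : W → Option W := fun v => if v = v₀ ∨ v = w₀ then none else p v with hpdel
      have hpdelPF : IsPF G pdel := by
        intro a c hac
        simp only [hpdel] at hac
        split_ifs at hac with h1
        push_neg at h1
        have h2 := hp hac
        have hcv₀ : c ≠ v₀ := by
          intro h
          have h3 := h2.1
          rw [h, hw₀] at h3
          exact h1.2 (Option.some.inj h3).symm
        have hcw₀ : c ≠ w₀ := by
          intro h
          have h3 := h2.1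
          rw [h, (hp hw₀).1] at h3
          exact h1.1 (Option.some.inj h3).symm
        constructor
        · simp only [hpdel, if_neg (show ¬(c = v₀ ∨ c = w₀) by push_neg; exact ⟨hcv₀, hcw₀⟩)]
          exact h2.1
        · exact h2.2
      have hsupdel : sup pdel = ((sup p).erase v₀).erase w₀ := by
        ext a
        rw [mem_sup, Finset.mem_erase, Finset.mem_erase, mem_sup]
        simp only [hpdel]
        split_ifs with h1
        · constructor
          · rintro ⟨w, hw⟩; exact absurd hw (by simp)
          · rintro ⟨haw, hav, -⟩
            rcases h1 with h | h
            exacts [absurd h hav, absurd h haw]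
        · push_neg at h1
          constructor
          · rintro ⟨w, hw⟩; exact ⟨h1.2, h1.1, w, hw⟩
          · rintro ⟨-, -, w, hw⟩; exact ⟨w, hw⟩
      have hcd : (sup pdel).card = (sup p).card - 2 := by
        rw [hsupdel, Finset.card_erase_of_mem
          (Finset.mem_erase.2 ⟨Ne.symm hv₀w₀, hw₀sup⟩), Finset.card_erase_of_mem hv₀p]
        omega
      have hsub : ∀ a ∈ sup pdel, a ∈ s := by
        intro a ha
        rw [hsupdel] at ha
        have h2 := Finset.mem_erase.1 (Finset.mem_of_mem_erase ha)
        simp [hs, h2.1]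
      obtain ⟨pm, hpm, hmaxm⟩ := exists_max_pf (G.induce s)
      have hIH := IH ↥s (inferInstance) (Subtype.instDecidableEq) (G.induce s) (by omega) pm hpm hmaxm
      have hup : (sup pm).card = (sup p).card - 2 := by
        apply le_antisymm
        · by_contra hgt
          push_neg at hgt
          set pl := liftPF s pm with hpl
          have hplPF : IsPF G pl := liftPF_isPF hpm
          have hplc : (sup pl).card = (sup pm).card := card_sup_liftPF pm
          have hle1 : (sup pl).card ≤ (sup p).card := hmax pl hplPF
          have he1 := hp.even_sup
          have he2 := hplPF.even_sup
          rw [Nat.even_iff] at he1 he2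
          have hcle : (sup pl).card = (sup p).card := by omega
          have hplmax : ∀ r, IsPF G r → (sup r).card ≤ (sup pl).card := by
            intro r hr; rw [hcle]; exact hmax r hr
          have hvin : v₀ ∈ sup pl := hv₀ pl hplPF hplmax
          exact liftPF_avoid (by simp [hs]) hvin
        · have hrest := restPF_isPF hpdelPF hsub
          have h2 := hmaxm (restPF s pdel) hrest
          rw [card_sup_restPF hpdelPF hsub, hcd] at h2
          exact h2
      obtain ⟨S', hS'mem, hS'⟩ := Finset.exists_mem_eq_inf' (Finset.univ_nonempty)
        (fun S : Finset ↥s =>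
          (S.card : ℤ) - (oddCount ((G.induce s).induce ((S : Set ↥s)ᶜ)) : ℤ) +
            (Fintype.card ↥s : ℤ))
      set S₀ : Finset W := insert v₀ (S'.image Subtype.val) with hS₀
      have hv₀img : v₀ ∉ S'.image Subtype.val := by
        simp only [Finset.mem_image]
        rintro ⟨x, -, hx⟩
        exact x.2 (by simp [hs, hx])
      have hS₀card : S₀.card = S'.card + 1 := by
        rw [hS₀, Finset.card_insert_of_notMem hv₀img,
          Finset.card_image_of_injective _ Subtype.val_injective]
      have hocc : oddCount (G.induce ((S₀ : Set W)ᶜ)) =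
          oddCount ((G.induce s).induce ((S' : Set ↥s)ᶜ)) := by
        rw [hS₀, oddCount_induce_congr G (compl_insert_image S')]
        exact (oddCount_eq_of_iso (induceInduceIso G s ((S' : Set ↥s)ᶜ))).symm
      have hfin := minf_le G S₀
      rw [hocc] at hfin
      have hminf' : minf (G.induce s) =
          (S'.card : ℤ) - (oddCount ((G.induce s).induce ((S' : Set ↥s)ᶜ)) : ℤ) +
            (Fintype.card ↥s : ℤ) := hS'
      have hcV : (Fintype.card W : ℤ) = (Fintype.card ↥s : ℤ) + 1 := by
        rw [hcards, Nat.cast_sub h1W, Nat.cast_one]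
        ring
      have hupZ : ((sup pm).card : ℤ) = ((sup p).card : ℤ) - 2 := by
        rw [hup, Nat.cast_sub hA2]
        norm_num
      calc minf G ≤ (S₀.card : ℤ) -
            (oddCount ((G.induce s).induce ((S' : Set ↥s)ᶜ)) : ℤ) + (Fintype.card W : ℤ) := hfin
        _ = ((S'.card : ℤ) - (oddCount ((G.induce s).induce ((S' : Set ↥s)ᶜ)) : ℤ) +
            (Fintype.card ↥s : ℤ)) + 2 := by
            rw [hS₀card, hcV]; push_cast; ring
        _ = minf (G.induce s) + 2 := by rw [hminf']
        _ ≤ ((sup pm).card : ℤ) + 2 := by linarith [hIH]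
        _ = ((sup p).card : ℤ) := by rw [hupZ]; ring
    · push_neg at hc1
      have hbound := case2_bound hc1 hp hmax
      have h1 := minf_le G ∅
      have hset : (((∅ : Finset W) : Set W))ᶜ = (Set.univ : Set W) := by simp
      have hoc : oddCount (G.induce (((∅ : Finset W) : Set W)ᶜ)) = oddCount G := by
        rw [oddCount_induce_congr G hset]
        exact oddCount_eq_of_iso (induceUnivIso G)
      rw [hoc] at h1
      simp only [Finset.card_empty, Nat.cast_zero] at h1
      have hcast : (Fintype.card W : ℤ) ≤ (oddCount G : ℤ) + ((sup p).card : ℤ) := by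
        exact_mod_cast hbound
      linarith

end Hard

end TB

open TB in
/-- Tutte–Berge formula: in a finite simple graph there is a matching `M` of
maximum size, and `2·|M|` equals the minimum over all vertex subsets `S` of
`|S| − odd(G − S) + |V|` (stated over `ℤ`). -/
theorem tutte_berge_formula {V : Type*} [Fintype V] [DecidableEq V]
    (G : SimpleGraph V) :
    ∃ M : G.Subgraph, M.IsMatching ∧
      (∀ M' : G.Subgraph, M'.IsMatching → M'.edgeSet.ncard ≤ M.edgeSet.ncard) ∧
      (2 * M.edgeSet.ncard : ℤ) =
        Finset.univ.inf' Finset.univ_nonempty (fun S : Finset V =>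
          (S.card : ℤ) -
            (Nat.card {c : (G.induce ((S : Set V)ᶜ)).ConnectedComponent //
                Odd c.supp.ncard} : ℤ) +
            (Fintype.card V : ℤ)) := by
  classical
  obtain ⟨p, hp, hmax⟩ := exists_max_pf G
  have h2 : 2 * (pfSub G p hp).edgeSet.ncard = (sup p).card := pfSub_edge_ncard hp
  refine ⟨pfSub G p hp, pfSub_isMatching hp, ?_, ?_⟩
  · intro M' hM'
    have h1 : 2 * M'.edgeSet.ncard = M'.verts.ncard := matching_two_mul_edge hM'
    have h3 : M'.verts.ncard = (sup (pOf M')).card := by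
      rw [← sup_pOf hM', Set.ncard_coe_finset]
    have h4 := hmax _ (pOf_isPF hM')
    omega
  · have hle : minf G ≤ ((sup p).card : ℤ) :=
      hard_aux (Fintype.card V) V _ _ G le_rfl p hp hmax
    have hge : ((sup p).card : ℤ) ≤ minf G := by
      apply Finset.le_inf'
      intro S _
      have hnat := easy_bound hp S
      have hcast : ((oddCount (G.induce ((S : Set V)ᶜ)) : ℤ)) + ((sup p).card : ℤ) ≤
          (S.card : ℤ) + (Fintype.card V : ℤ) := by exact_mod_cast hnat
      linarith
    have hfinal : minf G = ((sup p).card : ℤ) := le_antisymm hle hge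
    calc (2 * (pfSub G p hp).edgeSet.ncard : ℤ) = ((sup p).card : ℤ) := by exact_mod_cast h2
    _ = minf G := hfinal.symm
    _ = _ := rfl
end

section
/- Diameter gadget: Let G be a bipartite graph on parts L and R (each of size n/2), possibly with some edges between L and R. Form G' by adding vertices a, b with a adjacent to every vertex of L, b adjacent to every vertex of R, and edge {a,b}; then append paths of length 2 to fixed vertices i ∈ L and j ∈ R (adding new vertices i_1, i_2 with edges {i,i_1},{i_1,i_2}, and similarly j_1, j_2). Then G' is connected, and the distance between i_2 and j_2 is 5 if {i,j} is an edge of G, and 7 otherwise. -/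
/-- The six auxiliary vertices of the diameter gadget. -/
inductive DiamExtra : Type
  | a | b | i1 | i2 | j1 | j2
  deriving DecidableEq

/-- Vertices: left part `Fin m`, right part `Fin m`, plus `a, b, i1, i2, j1, j2`.
Edges: `l_u ~ r_w` for `(u,w) ∈ EA`; `a` adjacent to all of `L`; `b` adjacent to
all of `R`; `a ~ b`; the path `i ~ i1 ~ i2` appended at `i ∈ L`; and the path
`j ~ j1 ~ j2` appended at `j ∈ R`. -/
def diamGadgetRel (m : ℕ) (EA : Set (Fin m × Fin m)) (i j : Fin m) :
    (Fin m ⊕ Fin m) ⊕ DiamExtra → (Fin m ⊕ Fin m) ⊕ DiamExtra → Prop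
  | .inl (.inl u), .inl (.inr w) => (u, w) ∈ EA
  | .inr .a, .inl (.inl _) => True
  | .inr .b, .inl (.inr _) => True
  | .inr .a, .inr .b => True
  | .inl (.inl u), .inr .i1 => u = i
  | .inr .i1, .inr .i2 => True
  | .inl (.inr w), .inr .j1 => w = j
  | .inr .j1, .inr .j2 => True
  | _, _ => False

namespace DiamGadgetAux

/-- Any walk changes a 1-Lipschitz potential function by at most its length. -/
lemma walk_bound {V : Type*} {G : SimpleGraph V} (f : V → ℤ)
    (hf : ∀ u v, G.Adj u v → f v ≤ f u + 1) {x y : V} (p : G.Walk x y) :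
    f y ≤ f x + p.length := by
  induction p with
  | nil => simp
  | cons h q ih =>
      have := hf _ _ h
      simp only [SimpleGraph.Walk.length_cons]
      push_cast
      omega

variable (m : ℕ) (EA : Set (Fin m × Fin m)) (i j : Fin m)

/-- Potential function for the non-edge lower bound (distance ≥ 7). -/
def fNE : (Fin m ⊕ Fin m) ⊕ DiamExtra → ℤ
  | .inl (.inl u) => if u = i then 2 else 4
  | .inl (.inr w) => if w = j then 5 else 3
  | .inr .a => 3
  | .inr .b => 4
  | .inr .i1 => 1
  | .inr .i2 => 0
  | .inr .j1 => 6
  | .inr .j2 => 7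

/-- Potential function for the edge-case lower bound (distance ≥ 5). -/
def fE : (Fin m ⊕ Fin m) ⊕ DiamExtra → ℤ
  | .inl (.inl u) => if u = i then 2 else 3
  | .inl (.inr _) => 3
  | .inr .a => 3
  | .inr .b => 4
  | .inr .i1 => 1
  | .inr .i2 => 0
  | .inr .j1 => 4
  | .inr .j2 => 5

lemma fNE_lip (h : (i, j) ∉ EA) : ∀ u v, diamGadgetRel m EA i j u v →
    fNE m i j v ≤ fNE m i j u + 1 ∧ fNE m i j u ≤ fNE m i j v + 1 := by
  rintro ((u|u)|(_|_|_|_|_|_)) ((v|v)|(_|_|_|_|_|_)) hr <;>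
    simp only [diamGadgetRel] at hr <;>
    first
      | exact hr.elim
      | (simp [fNE, hr]; done)
      | (simp only [fNE]; split_ifs <;> omega)
      | (rcases eq_or_ne u i with rfl | hu
         · rcases eq_or_ne v j with rfl | hv
           · exact absurd hr h
           · simp [fNE, hv]
         · simp only [fNE, if_neg hu]; split_ifs <;> omega)

lemma fE_lip : ∀ u v, diamGadgetRel m EA i j u v →
    fE m i v ≤ fE m i u + 1 ∧ fE m i u ≤ fE m i v + 1 := by
  rintro ((u|u)|(_|_|_|_|_|_)) ((v|v)|(_|_|_|_|_|_)) hr <;>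
    simp only [diamGadgetRel] at hr <;>
    first
      | exact hr.elim
      | (simp [fE, hr]; done)
      | (simp only [fE]; split_ifs <;> omega)

end DiamGadgetAux

/-- Diameter gadget: the graph above is connected, and the distance between
`i2` and `j2` is `5` if `(i,j) ∈ EA` and `7` otherwise. -/
theorem diam_gadget (m : ℕ) (EA : Set (Fin m × Fin m)) (i j : Fin m) :
    (SimpleGraph.fromRel (diamGadgetRel m EA i j)).Connected ∧
    (((i, j) ∈ EA) →
      (SimpleGraph.fromRel (diamGadgetRel m EA i j)).dist
        (.inr .i2) (.inr .j2) = 5) ∧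
    (((i, j) ∉ EA) →
      (SimpleGraph.fromRel (diamGadgetRel m EA i j)).dist
        (.inr .i2) (.inr .j2) = 7) := by
  set G := SimpleGraph.fromRel (diamGadgetRel m EA i j) with hG
  have adj : ∀ u v, u ≠ v →
      (diamGadgetRel m EA i j u v ∨ diamGadgetRel m EA i j v u) → G.Adj u v :=
    fun u v h1 h2 => ⟨h1, h2⟩
  have hadj : ∀ u v, G.Adj u v →
      (diamGadgetRel m EA i j u v ∨ diamGadgetRel m EA i j v u) := fun u v h => h.2
  have h_i2i1 : G.Adj (.inr .i2) (.inr .i1) := adj _ _ (by simp) (Or.inr trivial)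
  have h_i1i : G.Adj (.inr .i1) (.inl (.inl i)) := adj _ _ (by simp) (Or.inr rfl)
  have h_ia : G.Adj (.inl (.inl i)) (.inr .a) := adj _ _ (by simp) (Or.inr trivial)
  have h_ab : G.Adj (.inr .a) (.inr .b) := adj _ _ (by simp) (Or.inl trivial)
  have h_bj : G.Adj (.inr .b) (.inl (.inr j)) := adj _ _ (by simp) (Or.inl trivial)
  have h_jj1 : G.Adj (.inl (.inr j)) (.inr .j1) := adj _ _ (by simp) (Or.inl rfl)
  have h_j1j2 : G.Adj (.inr .j1) (.inr .j2) := adj _ _ (by simp) (Or.inl trivial)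
  have h_al : ∀ u, G.Adj (.inr .a) (.inl (.inl u)) :=
    fun u => adj _ _ (by simp) (Or.inl trivial)
  have h_br : ∀ w, G.Adj (.inr .b) (.inl (.inr w)) :=
    fun w => adj _ _ (by simp) (Or.inl trivial)
  have reach : ∀ v, G.Reachable (.inr .a) v := by
    rintro ((u|u)|(_|_|_|_|_|_))
    · exact (h_al u).reachable
    · exact h_ab.reachable.trans (h_br u).reachable
    · exact SimpleGraph.Reachable.refl _
    · exact h_ab.reachable
    · exact (h_al i).reachable.trans h_i1i.symm.reachable
    · exact ((h_al i).reachable.trans h_i1i.symm.reachable).trans h_i2i1.symm.reachable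
    · exact (h_ab.reachable.trans (h_br j).reachable).trans h_jj1.reachable
    · exact ((h_ab.reachable.trans (h_br j).reachable).trans h_jj1.reachable).trans
        h_j1j2.reachable
  haveI : Nonempty ((Fin m ⊕ Fin m) ⊕ DiamExtra) := ⟨.inr DiamExtra.a⟩
  have hconn : G.Connected := ⟨fun u v => (reach u).symm.trans (reach v)⟩
  refine ⟨hconn, ?_, ?_⟩
  · intro hmem
    have h_ij : G.Adj (.inl (.inl i)) (.inl (.inr j)) := adj _ _ (by simp) (Or.inl hmem)
    have hub : G.dist (.inr .i2) (.inr .j2) ≤ 5 := by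
      have := SimpleGraph.dist_le
        (.cons h_i2i1 (.cons h_i1i (.cons h_ij (.cons h_jj1 (.cons h_j1j2 .nil)))))
      simpa using this
    obtain ⟨p, hp⟩ := ((reach (.inr .i2)).symm.trans
      (reach (.inr .j2))).exists_walk_length_eq_dist
    have hlb := DiamGadgetAux.walk_bound (DiamGadgetAux.fE m i)
      (fun u v huv => ((hadj u v huv).elim
        (fun h => (DiamGadgetAux.fE_lip m EA i j u v h).1)
        (fun h => (DiamGadgetAux.fE_lip m EA i j v u h).2))) p
    simp only [DiamGadgetAux.fE, hp] at hlb
    omega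
  · intro hmem
    have hub : G.dist (.inr .i2) (.inr .j2) ≤ 7 := by
      have := SimpleGraph.dist_le
        (.cons h_i2i1 (.cons h_i1i (.cons h_ia (.cons h_ab (.cons h_bj
          (.cons h_jj1 (.cons h_j1j2 .nil)))))))
      simpa using this
    obtain ⟨p, hp⟩ := ((reach (.inr .i2)).symm.trans
      (reach (.inr .j2))).exists_walk_length_eq_dist
    have hlb := DiamGadgetAux.walk_bound (DiamGadgetAux.fNE m i j)
      (fun u v huv => ((hadj u v huv).elim
        (fun h => (DiamGadgetAux.fNE_lip m EA i j hmem u v h).1)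
        (fun h => (DiamGadgetAux.fNE_lip m EA i j hmem v u h).2))) p
    simp only [DiamGadgetAux.fNE, hp] at hlb
    omega
end

section
/- Memory-checking multiset criterion: Consider a sequence of operations op_1, ..., op_T on an address space, where each operation t reads a (value, timestamp) pair (v_t, s_t) from address a_t and then writes (v'_t, t) to a_t, with s_t < t required. Suppose the memory initially holds (0, 0) at every address. If the multiset of all pairs (a_t, v_t, s_t) read equals the multiset of all pairs (a_t, v'_t, t) written (excluding a final read-out of every address and including the initial writes of (a, 0, 0) for each address a), then every read returns the value of the most recent write to its address. -/
/-- Memory-checking multiset criterion (Blum et al., correctness direction).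
Operations are indexed by `t : Fin T` and occur at time `t+1`; operation `t`
reads the (value, timestamp) pair `(v t, s t)` from address `a t` and writes
`(v' t, t+1)` there, with `s t < t+1`. Memory initially holds `(0,0)` at every
address, and a final read-out reads `(fv x, fs x)` from each address `x`, with
`fs x ≤ T`. If the multiset of all read triples (including the final read-out)
equals the multiset of all write triples (including the initial writes
`(x, 0, 0)`), then every read returns the value and timestamp of the most
recent write to its address: `(0, 0)` if the address was never written before,
and `(v' t', t'+1)` if `t'` is the latest earlier operation on that address. -/
theorem memory_checking_multiset_criterion {A : Type*} [Fintype A] (T : ℕ)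
    (a : Fin T → A) (v s v' : Fin T → ℕ) (fv fs : A → ℕ)
    (hst : ∀ t : Fin T, s t < t.val + 1)
    (hfs : ∀ x : A, fs x ≤ T)
    (hmulti :
      (Multiset.map (fun t : Fin T => (a t, v t, s t)) Finset.univ.val) +
        (Multiset.map (fun x : A => (x, fv x, fs x)) Finset.univ.val) =
      (Multiset.map (fun t : Fin T => (a t, v' t, t.val + 1)) Finset.univ.val) +
        (Multiset.map (fun x : A => (x, (0 : ℕ), (0 : ℕ))) Finset.univ.val)) :
    ∀ t : Fin T,
      ((∀ t' : Fin T, t'.val < t.val → a t' ≠ a t) → v t = 0 ∧ s t = 0) ∧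
      (∀ t' : Fin T, t'.val < t.val → a t' = a t →
        (∀ t'' : Fin T, t''.val < t.val → a t'' = a t → t''.val ≤ t'.val) →
        v t = v' t' ∧ s t = t'.val + 1) := by
  classical
  -- project the multiset equality to (address, timestamp) pairs
  have hproj : (Multiset.map (fun t : Fin T => (a t, s t)) Finset.univ.val) +
      (Multiset.map (fun x : A => (x, fs x)) Finset.univ.val) =
      (Multiset.map (fun t : Fin T => (a t, t.val + 1)) Finset.univ.val) +
      (Multiset.map (fun x : A => (x, (0 : ℕ))) Finset.univ.val) := by
    have h := congrArg (Multiset.map (fun p : A × ℕ × ℕ => (p.1, p.2.2))) hmulti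
    simpa [Multiset.map_map, Function.comp_def] using h
  -- the map t ↦ (a t, s t) is injective
  have INJ : ∀ t₁ t₂ : Fin T, a t₁ = a t₂ → s t₁ = s t₂ → t₁ = t₂ := by
    intro t₁ t₂ ha hs
    by_contra hne
    set p : A × ℕ := (a t₁, s t₁) with hp
    have h2 : 2 ≤ Multiset.count p
        (Multiset.map (fun t : Fin T => (a t, s t)) Finset.univ.val) := by
      rw [Multiset.count_map]
      have : (Multiset.filter (fun u => p = (a u, s u)) Finset.univ.val)
          = (Finset.filter (fun u => p = (a u, s u)) Finset.univ).val := by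
        simp [Finset.filter_val]
      rw [this]
      have : 1 < (Finset.filter (fun u => p = (a u, s u)) Finset.univ).card := by
        rw [Finset.one_lt_card]
        exact ⟨t₁, by simp [hp], t₂, by simp [hp, ha, hs], hne⟩
      exact this
    have hn1 : (Multiset.map (fun t : Fin T => (a t, t.val + 1)) Finset.univ.val).Nodup := by
      refine Multiset.Nodup.map ?_ Finset.univ.nodup
      intro u w huw
      have : u.val + 1 = w.val + 1 := congrArg Prod.snd huw
      exact Fin.ext (by omega)
    have hn2 : (Multiset.map (fun x : A => (x, (0 : ℕ))) Finset.univ.val).Nodup := by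
      refine Multiset.Nodup.map ?_ Finset.univ.nodup
      intro u w huw
      exact congrArg Prod.fst huw
    have hle : Multiset.count p
        ((Multiset.map (fun t : Fin T => (a t, t.val + 1)) Finset.univ.val) +
          (Multiset.map (fun x : A => (x, (0 : ℕ))) Finset.univ.val)) ≤ 1 := by
      rw [Multiset.count_add]
      by_cases h0 : p.2 = 0
      · have : Multiset.count p
            (Multiset.map (fun t : Fin T => (a t, t.val + 1)) Finset.univ.val) = 0 := by
          rw [Multiset.count_eq_zero]
          intro hmem
          obtain ⟨u, -, hu⟩ := Multiset.mem_map.1 hmem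
          have : u.val + 1 = p.2 := congrArg Prod.snd hu
          omega
        rw [this]
        have := Multiset.nodup_iff_count_le_one.1 hn2 p
        omega
      · have : Multiset.count p
            (Multiset.map (fun x : A => (x, (0 : ℕ))) Finset.univ.val) = 0 := by
          rw [Multiset.count_eq_zero]
          intro hmem
          obtain ⟨x, -, hx⟩ := Multiset.mem_map.1 hmem
          have : (0 : ℕ) = p.2 := congrArg Prod.snd hx
          omega
        rw [this]
        have := Multiset.nodup_iff_count_le_one.1 hn1 p
        omega
    have hcount := congrArg (Multiset.count p) hproj
    rw [Multiset.count_add] at hcount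
    have hge : 2 ≤ Multiset.count p
        ((Multiset.map (fun t : Fin T => (a t, t.val + 1)) Finset.univ.val) +
          (Multiset.map (fun x : A => (x, (0 : ℕ))) Finset.univ.val)) := by
      rw [← hproj, Multiset.count_add]; omega
    omega
  -- every read triple appears among the writes
  have MEM : ∀ t : Fin T, (v t = 0 ∧ s t = 0) ∨
      ∃ t' : Fin T, t'.val < t.val ∧ a t' = a t ∧ v t = v' t' ∧ s t = t'.val + 1 := by
    intro t
    have hm : (a t, v t, s t) ∈
        (Multiset.map (fun t : Fin T => (a t, v' t, t.val + 1)) Finset.univ.val) +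
          (Multiset.map (fun x : A => (x, (0 : ℕ), (0 : ℕ))) Finset.univ.val) := by
      rw [← hmulti]
      exact Multiset.mem_add.2 (Or.inl (Multiset.mem_map.2 ⟨t, Finset.mem_univ_val t, rfl⟩))
    rcases Multiset.mem_add.1 hm with h | h
    · obtain ⟨t', -, ht'⟩ := Multiset.mem_map.1 h
      have h1 : a t' = a t := congrArg Prod.fst ht'
      have h2 : v' t' = v t := congrArg (fun q : A × ℕ × ℕ => q.2.1) ht'
      have h3 : t'.val + 1 = s t := congrArg (fun q : A × ℕ × ℕ => q.2.2) ht'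
      have := hst t
      exact Or.inr ⟨t', by omega, h1, h2.symm, h3.symm⟩
    · obtain ⟨x, -, hx⟩ := Multiset.mem_map.1 h
      have h2 : (0 : ℕ) = v t := congrArg (fun q : A × ℕ × ℕ => q.2.1) hx
      have h3 : (0 : ℕ) = s t := congrArg (fun q : A × ℕ × ℕ => q.2.2) hx
      exact Or.inl ⟨h2.symm, h3.symm⟩
  -- main strong induction
  have KEY : ∀ n : ℕ, ∀ t : Fin T, t.val < n →
      ((∀ t' : Fin T, t'.val < t.val → a t' ≠ a t) → v t = 0 ∧ s t = 0) ∧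
      (∀ t' : Fin T, t'.val < t.val → a t' = a t →
        (∀ t'' : Fin T, t''.val < t.val → a t'' = a t → t''.val ≤ t'.val) →
        v t = v' t' ∧ s t = t'.val + 1) := by
    intro n
    induction n with
    | zero => intro t ht; omega
    | succ n ih =>
      intro t ht
      have IH : ∀ u : Fin T, u.val < t.val →
          ((∀ t' : Fin T, t'.val < u.val → a t' ≠ a u) → v u = 0 ∧ s u = 0) ∧
          (∀ t' : Fin T, t'.val < u.val → a t' = a u →
            (∀ t'' : Fin T, t''.val < u.val → a t'' = a u → t''.val ≤ t'.val) →
            v u = v' t' ∧ s u = t'.val + 1) := fun u hu => ih u (by omega)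
      constructor
      · intro hnone
        rcases MEM t with ⟨hv, hs⟩ | ⟨t', hlt, ha, -, -⟩
        · exact ⟨hv, hs⟩
        · exact absurd ha (hnone t' hlt)
      · intro t' hlt ha hmax
        rcases MEM t with ⟨hv0, hs0⟩ | ⟨t'', hlt'', ha'', hv'', hs''⟩
        · -- s t = 0, contradiction with the first op on address a t
          exfalso
          set F := Finset.filter (fun u : Fin T => a u = a t ∧ u.val < t.val) Finset.univ with hF
          have hFne : F.Nonempty := ⟨t', by rw [hF, Finset.mem_filter]; exact ⟨Finset.mem_univ _, ha, hlt⟩⟩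
          set t₀ := F.min' hFne with ht₀
          have ht₀F : t₀ ∈ F := F.min'_mem hFne
          rw [hF, Finset.mem_filter] at ht₀F
          obtain ⟨-, ha₀, hlt₀⟩ := ht₀F
          have hfirst : ∀ u : Fin T, u.val < t₀.val → a u ≠ a t₀ := by
            intro u hu hau
            have huF : u ∈ F := by
              rw [hF, Finset.mem_filter]
              exact ⟨Finset.mem_univ u, by rw [hau, ha₀], by omega⟩
            have := F.min'_le u huF
            rw [← ht₀] at this
            have : t₀.val ≤ u.val := this
            omega
          obtain ⟨-, hs0'⟩ := (IH t₀ hlt₀).1 hfirst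
          have := INJ t₀ t ha₀ (by rw [hs0', hs0])
          have : t₀.val = t.val := congrArg Fin.val this
          omega
        · -- s t = t'' + 1 ; show t'' is the maximal earlier op
          have ht''le : t''.val ≤ t'.val := hmax t'' hlt'' ha''
          rcases eq_or_lt_of_le ht''le with heq | hltt
          · have : t'' = t' := Fin.ext heq
            subst this
            exact ⟨hv'', hs''⟩
          · exfalso
            set F' := Finset.filter
              (fun u : Fin T => a u = a t ∧ t''.val < u.val ∧ u.val < t.val) Finset.univ with hF'
            have hF'ne : F'.Nonempty := ⟨t', by rw [hF', Finset.mem_filter]; exact ⟨Finset.mem_univ _, ha, hltt, hlt⟩⟩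
            set t₁ := F'.min' hF'ne with ht₁
            have ht₁F : t₁ ∈ F' := F'.min'_mem hF'ne
            rw [hF', Finset.mem_filter] at ht₁F
            obtain ⟨-, ha₁, hgt₁, hlt₁⟩ := ht₁F
            have hmax₁ : ∀ u : Fin T, u.val < t₁.val → a u = a t₁ → u.val ≤ t''.val := by
              intro u hu hau
              by_contra hc
              push_neg at hc
              have huF : u ∈ F' := by
                rw [hF', Finset.mem_filter]
                exact ⟨Finset.mem_univ u, by rw [hau, ha₁], hc, by omega⟩
              have := F'.min'_le u huF
              rw [← ht₁] at this
              have : t₁.val ≤ u.val := this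
              omega
            obtain ⟨-, hs₁⟩ := (IH t₁ hlt₁).2 t'' (by omega) (by rw [ha'', ha₁]) hmax₁
            have := INJ t₁ t ha₁ (by rw [hs₁, hs''])
            have : t₁.val = t.val := congrArg Fin.val this
            omega
  intro t
  exact KEY (t.val + 1) t (Nat.lt_succ_self _)
end
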